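/- arXiv:1406.1840 — 6 statements merged into one kernel-verified Lean document; each statement's English description precedes it below -/
import Mathlib

section
/- Let g be an H-type Lie algebra with center z. If X ∈ z⊥ has ‖X‖ = 1, then ad_X maps (ker ad_X)⊥ isometrically onto z. -/
/-!
Fix a unit vector `X ∈ zᗮ`. Since `ad_X` kills `z` and `J_Z X ∈ zᗮ`, the defining identity of `J`
extends to `⟪J_Z X, Y⟫ = ⟪Z, [X, Y]⟫` for all `Y`: the map `S : Z ↦ J_Z X` is adjoint to
`ad_X : g → z` on `z`. Being an adjoint it is linear on `z`, and it sends unit vectors to unit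
vectors, so it is an isometry `z → g`. Hence `ad_X ∘ S = id` on `z`, the range of `S` is
`(ker ad_X)ᗮ`, and `ad_X` restricted to `(ker ad_X)ᗮ` is the inverse isometry `S⁻¹`.
-/

open scoped RealInnerProductSpace

def IsAdjointOn {E F : Type*} [NormedAddCommGroup E] [InnerProductSpace ℝ E]
    [NormedAddCommGroup F] [InnerProductSpace ℝ F]
    (T : E →ₗ[ℝ] F) (z : Submodule ℝ F) (S : F → E) : Prop :=
  ∀ w ∈ z, ∀ y, ⟪S w, y⟫ = ⟪w, T y⟫

namespace IsAdjointOn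

variable {E F : Type*} [NormedAddCommGroup E] [InnerProductSpace ℝ E]
  [NormedAddCommGroup F] [InnerProductSpace ℝ F]
  {T : E →ₗ[ℝ] F} {z : Submodule ℝ F} {S : F → E}

theorem map_add (hS : IsAdjointOn T z S) {w w' : F} (hw : w ∈ z) (hw' : w' ∈ z) :
    S (w + w') = S w + S w' :=
  ext_inner_right ℝ fun y => by
    rw [inner_add_left, hS _ (z.add_mem hw hw'), hS w hw, hS w' hw', inner_add_left]

theorem map_smul (hS : IsAdjointOn T z S) (c : ℝ) {w : F} (hw : w ∈ z) :
    S (c • w) = c • S w :=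
  ext_inner_right ℝ fun y => by
    rw [real_inner_smul_left, hS _ (z.smul_mem c hw), hS w hw, real_inner_smul_left]

theorem norm_map (hS : IsAdjointOn T z S) (hunit : ∀ w ∈ z, ‖w‖ = 1 → ‖S w‖ = 1)
    {w : F} (hw : w ∈ z) : ‖S w‖ = ‖w‖ := by
  rcases eq_or_ne w 0 with rfl | hw0
  · simpa using hS.map_smul 0 z.zero_mem
  have hnorm : ‖w‖ ≠ 0 := norm_ne_zero_iff.mpr hw0
  have hu : ‖w‖⁻¹ • w ∈ z := z.smul_mem _ hw
  have hu1 : ‖‖w‖⁻¹ • w‖ = 1 := by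
    rw [norm_smul, norm_inv, norm_norm, inv_mul_cancel₀ hnorm]
  calc ‖S w‖ = ‖S (‖w‖ • ‖w‖⁻¹ • w)‖ := by rw [smul_inv_smul₀ hnorm]
    _ = ‖w‖ := by rw [hS.map_smul _ hu, norm_smul, hunit _ hu hu1, norm_norm, mul_one]

theorem inner_map_map (hS : IsAdjointOn T z S) (hunit : ∀ w ∈ z, ‖w‖ = 1 → ‖S w‖ = 1)
    {w w' : F} (hw : w ∈ z) (hw' : w' ∈ z) : ⟪S w, S w'⟫ = ⟪w, w'⟫ := by
  rw [real_inner_eq_norm_add_mul_self_sub_norm_mul_self_sub_norm_mul_self_div_two,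
    real_inner_eq_norm_add_mul_self_sub_norm_mul_self_sub_norm_mul_self_div_two,
    ← hS.map_add hw hw', hS.norm_map hunit (z.add_mem hw hw'), hS.norm_map hunit hw,
    hS.norm_map hunit hw']

theorem apply_map (hS : IsAdjointOn T z S) (hunit : ∀ w ∈ z, ‖w‖ = 1 → ‖S w‖ = 1)
    (hrange : ∀ y, T y ∈ z) {w : F} (hw : w ∈ z) : T (S w) = w := by
  have hdiff : T (S w) - w ∈ z := z.sub_mem (hrange _) hw
  have horth : T (S w) - w ∈ zᗮ := fun w' hw' => by
    rw [inner_sub_right, ← hS w' hw', hS.inner_map_map hunit hw' hw, sub_self]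
  exact sub_eq_zero.mp (inner_self_eq_zero.mp (horth _ hdiff))

theorem map_mem_orthogonal_ker (hS : IsAdjointOn T z S) {w : F} (hw : w ∈ z) :
    S w ∈ (LinearMap.ker T)ᗮ := fun y hy => by
  rw [real_inner_comm, hS w hw, LinearMap.mem_ker.mp hy, inner_zero_right]

theorem map_apply (hS : IsAdjointOn T z S) (hunit : ∀ w ∈ z, ‖w‖ = 1 → ‖S w‖ = 1)
    (hrange : ∀ y, T y ∈ z) {y : E} (hy : y ∈ (LinearMap.ker T)ᗮ) : S (T y) = y := by
  have hker : S (T y) - y ∈ LinearMap.ker T := by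
    rw [LinearMap.mem_ker, map_sub, hS.apply_map hunit hrange (hrange y), sub_self]
  have horth : S (T y) - y ∈ (LinearMap.ker T)ᗮ :=
    Submodule.sub_mem _ (hS.map_mem_orthogonal_ker (hrange y)) hy
  exact sub_eq_zero.mp (inner_self_eq_zero.mp (horth _ hker))

theorem norm_apply (hS : IsAdjointOn T z S) (hunit : ∀ w ∈ z, ‖w‖ = 1 → ‖S w‖ = 1)
    (hrange : ∀ y, T y ∈ z) {y : E} (hy : y ∈ (LinearMap.ker T)ᗮ) : ‖T y‖ = ‖y‖ := by
  rw [← hS.norm_map hunit (hrange y), hS.map_apply hunit hrange hy]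

theorem map_orthogonal_ker (hS : IsAdjointOn T z S) (hunit : ∀ w ∈ z, ‖w‖ = 1 → ‖S w‖ = 1)
    (hrange : ∀ y, T y ∈ z) : (LinearMap.ker T)ᗮ.map T = z := by
  refine le_antisymm (Submodule.map_le_iff_le_comap.mpr fun y _ => hrange y) fun w hw => ?_
  exact ⟨S w, hS.map_mem_orthogonal_ker hw, hS.apply_map hunit hrange hw⟩

end IsAdjointOn

section HType

variable {g : Type*} [NormedAddCommGroup g] [InnerProductSpace ℝ g]
  {bracket : g →ₗ[ℝ] g →ₗ[ℝ] g} {z : Submodule ℝ g}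

theorem bracket_eq_zero_of_mem_center (hanti : ∀ X Y : g, bracket X Y = - bracket Y X)
    (hz : ∀ Z : g, Z ∈ z ↔ ∀ Y : g, bracket Z Y = 0) (X : g) {Z : g} (hZ : Z ∈ z) :
    bracket X Z = 0 := by
  rw [hanti, (hz Z).mp hZ X, neg_zero]

variable [z.HasOrthogonalProjection]

theorem bracket_mem_center (hanti : ∀ X Y : g, bracket X Y = - bracket Y X)
    (hz : ∀ Z : g, Z ∈ z ↔ ∀ Y : g, bracket Z Y = 0)
    (hbz : ∀ X ∈ zᗮ, ∀ Y ∈ zᗮ, bracket X Y ∈ z) {X : g} (hX : X ∈ zᗮ) (Y : g) :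
    bracket X Y ∈ z := by
  obtain ⟨Y₁, hY₁, Y₂, hY₂, rfl⟩ := z.exists_add_mem_mem_orthogonal Y
  rw [map_add, bracket_eq_zero_of_mem_center hanti hz X hY₁, zero_add]
  exact hbz X hX Y₂ hY₂

theorem isAdjointOn_J (hanti : ∀ X Y : g, bracket X Y = - bracket Y X)
    (hz : ∀ Z : g, Z ∈ z ↔ ∀ Y : g, bracket Z Y = 0) {J : g → g →ₗ[ℝ] g}
    (hJdef : ∀ Z ∈ z, ∀ X ∈ zᗮ, ∀ Y ∈ zᗮ, ⟪J Z X, Y⟫ = ⟪Z, bracket X Y⟫)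
    (hJmem : ∀ Z ∈ z, ∀ X ∈ zᗮ, J Z X ∈ zᗮ) {X : g} (hX : X ∈ zᗮ) :
    IsAdjointOn (bracket X) z (fun Z => J Z X) := by
  intro Z hZ Y
  obtain ⟨Y₁, hY₁, Y₂, hY₂, rfl⟩ := z.exists_add_mem_mem_orthogonal Y
  rw [map_add, bracket_eq_zero_of_mem_center hanti hz X hY₁, zero_add, inner_add_right,
    Submodule.inner_left_of_mem_orthogonal hY₁ (hJmem Z hZ X hX), zero_add,
    hJdef Z hZ X hX Y₂ hY₂]

end HType

theorem stmt2_general {g : Type*} [NormedAddCommGroup g] [InnerProductSpace ℝ g]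
    [FiniteDimensional ℝ g]
    (bracket : g →ₗ[ℝ] g →ₗ[ℝ] g)
    (hanti : ∀ X Y : g, bracket X Y = - bracket Y X)
    (z : Submodule ℝ g)
    (hz : ∀ Z : g, Z ∈ z ↔ ∀ Y : g, bracket Z Y = 0)
    (J : g → g →ₗ[ℝ] g)
    (hJdef : ∀ Z ∈ z, ∀ X ∈ zᗮ, ∀ Y ∈ zᗮ, ⟪J Z X, Y⟫ = ⟪Z, bracket X Y⟫)
    (hJmem : ∀ Z ∈ z, ∀ X ∈ zᗮ, J Z X ∈ zᗮ)
    (hJorth : ∀ Z ∈ z, ‖Z‖ = 1 → ∀ X ∈ zᗮ, ‖J Z X‖ = ‖X‖)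
    (hbz : ∀ X ∈ zᗮ, ∀ Y ∈ zᗮ, bracket X Y ∈ z) :
    ∀ X ∈ zᗮ, ‖X‖ = 1 →
      (∀ Y ∈ (LinearMap.ker (bracket X))ᗮ, ‖bracket X Y‖ = ‖Y‖) ∧
      Submodule.map (bracket X) (LinearMap.ker (bracket X))ᗮ = z := by
  intro X hX hX1
  have hadj := isAdjointOn_J hanti hz hJdef hJmem hX
  have hunit : ∀ Z ∈ z, ‖Z‖ = 1 → ‖J Z X‖ = 1 := fun Z hZ hZ1 =>
    (hJorth Z hZ hZ1 X hX).trans hX1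
  have hrange := bracket_mem_center hanti hz hbz hX
  exact ⟨fun Y hY => hadj.norm_apply hunit hrange hY, hadj.map_orthogonal_ker hunit hrange⟩

theorem stmt2 {g : Type*} [NormedAddCommGroup g] [InnerProductSpace ℝ g]
    [FiniteDimensional ℝ g]
    (bracket : g →ₗ[ℝ] g →ₗ[ℝ] g)
    (hanti : ∀ X Y : g, bracket X Y = - bracket Y X)
    (hjacobi : ∀ X Y Z : g,
      bracket X (bracket Y Z) + bracket Y (bracket Z X) + bracket Z (bracket X Y) = 0)
    (z : Submodule ℝ g)
    (hz : ∀ Z : g, Z ∈ z ↔ ∀ Y : g, bracket Z Y = 0)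
    (J : g → g →ₗ[ℝ] g)
    (hJdef : ∀ Z ∈ z, ∀ X ∈ zᗮ, ∀ Y ∈ zᗮ, ⟪J Z X, Y⟫ = ⟪Z, bracket X Y⟫)
    (hJmem : ∀ Z ∈ z, ∀ X ∈ zᗮ, J Z X ∈ zᗮ)
    (hJorth : ∀ Z ∈ z, ‖Z‖ = 1 → ∀ X ∈ zᗮ, ‖J Z X‖ = ‖X‖)
    (hbz : ∀ X ∈ zᗮ, ∀ Y ∈ zᗮ, bracket X Y ∈ z)
    (hspan : ∀ W ∈ z,
      W ∈ Submodule.span ℝ {w : g | ∃ X ∈ zᗮ, ∃ Y ∈ zᗮ, w = bracket X Y}) :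
    ∀ X ∈ zᗮ, ‖X‖ = 1 →
      (∀ Y ∈ (LinearMap.ker (bracket X))ᗮ, ‖bracket X Y‖ = ‖Y‖) ∧
      Submodule.map (bracket X) (LinearMap.ker (bracket X))ᗮ = z :=
  stmt2_general bracket hanti z hz J hJdef hJmem hJorth hbz
end

section
/- Let g be an H-type Lie algebra with center z. Then dim z⊥ is even and dim z⊥ ≥ dim z + 1. -/
/-! For a unit central `Z`, `J Z` restricts to a skew-adjoint isometry of `zᗮ`, hence squares to
`-1`, and then `det (J Z) ^ 2 = (-1) ^ dim zᗮ` forces `dim zᗮ` to be even.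
For `0 ≠ X ∈ zᗮ`, the identity `⟪Z, [X, J Z X]⟫ = ‖X‖ ^ 2` shows that no unit central vector is
orthogonal to `[X, zᗮ]`, so `ad X : zᗮ → z` is onto; its kernel contains `X`, and rank–nullity
gives `dim z + 1 ≤ dim zᗮ`. -/

open scoped RealInnerProductSpace

open Module

lemma LinearMap.even_finrank_of_comp_self_eq_neg_id {V : Type*} [AddCommGroup V] [Module ℝ V]
    [FiniteDimensional ℝ V] (T : V →ₗ[ℝ] V) (hT : T ∘ₗ T = -LinearMap.id) :
    Even (finrank ℝ V) := by
  have hdet : T.det * T.det = (-1) ^ finrank ℝ V := by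
    rw [← LinearMap.det_comp, hT, ← neg_one_smul ℝ LinearMap.id, LinearMap.det_smul,
      LinearMap.det_id, mul_one]
  by_contra hodd
  rw [(Nat.not_even_iff_odd.mp hodd).neg_one_pow] at hdet
  nlinarith [mul_self_nonneg T.det]

lemma LinearMap.comp_self_eq_neg_id_of_skew_of_norm_map {V : Type*} [NormedAddCommGroup V]
    [InnerProductSpace ℝ V] (T : V →ₗ[ℝ] V) (hskew : ∀ a b, ⟪T a, b⟫ = -⟪a, T b⟫)
    (hnorm : ∀ a, ‖T a‖ = ‖a‖) : T ∘ₗ T = -LinearMap.id := by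
  ext a
  refine ext_inner_right ℝ fun b => ?_
  let T' : V →ₗᵢ[ℝ] V := ⟨T, hnorm⟩
  rw [LinearMap.comp_apply, hskew, LinearMap.neg_apply, LinearMap.id_apply, inner_neg_left]
  exact congrArg Neg.neg (T'.inner_map_map a b)

section HType

variable {g : Type*} [NormedAddCommGroup g] [InnerProductSpace ℝ g]
  {bracket : g →ₗ[ℝ] g →ₗ[ℝ] g} {z : Submodule ℝ g} {J : g → g →ₗ[ℝ] g}

lemma bracket_self_eq_zero (hanti : ∀ X Y : g, bracket X Y = - bracket Y X) (X : g) :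
    bracket X X = 0 := by
  have h : (2 : ℝ) • bracket X X = 0 := by
    rw [two_smul]
    nth_rewrite 2 [hanti]
    exact add_neg_cancel _
  exact (smul_eq_zero.mp h).resolve_left two_ne_zero

lemma center_ne_bot [Nontrivial g] (hz : ∀ Z : g, Z ∈ z ↔ ∀ Y : g, bracket Z Y = 0)
    (hbz : ∀ X ∈ zᗮ, ∀ Y ∈ zᗮ, bracket X Y ∈ z) : z ≠ ⊥ := by
  rintro rfl
  obtain ⟨X, hX⟩ := exists_ne (0 : g)
  refine hX ((Submodule.mem_bot ℝ).mp ((hz X).mpr fun Y => ?_))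
  simpa using hbz X (by simp) Y (by simp)

lemma orthogonal_center_ne_bot [Nontrivial g] [FiniteDimensional ℝ g]
    (hspan : ∀ W ∈ z,
      W ∈ Submodule.span ℝ {w : g | ∃ X ∈ zᗮ, ∃ Y ∈ zᗮ, w = bracket X Y}) : zᗮ ≠ ⊥ := by
  intro hbot
  obtain ⟨W, hW⟩ := exists_ne (0 : g)
  have hW' := hspan W (Submodule.orthogonal_eq_bot_iff.mp hbot ▸ Submodule.mem_top)
  exact hW (by simpa [hbot] using hW')

lemma inner_bracket_J_self
    (hJdef : ∀ Z ∈ z, ∀ X ∈ zᗮ, ∀ Y ∈ zᗮ, ⟪J Z X, Y⟫ = ⟪Z, bracket X Y⟫)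
    (hJmem : ∀ Z ∈ z, ∀ X ∈ zᗮ, J Z X ∈ zᗮ)
    (hJorth : ∀ Z ∈ z, ‖Z‖ = 1 → ∀ X ∈ zᗮ, ‖J Z X‖ = ‖X‖)
    {Z : g} (hZ : Z ∈ z) (hZ1 : ‖Z‖ = 1) {X : g} (hX : X ∈ zᗮ) :
    ⟪Z, bracket X (J Z X)⟫ = ‖X‖ ^ 2 := by
  rw [← hJdef Z hZ X hX _ (hJmem Z hZ X hX), real_inner_self_eq_norm_sq, hJorth Z hZ hZ1 X hX]

lemma eq_zero_of_inner_bracket_eq_zero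
    (hJdef : ∀ Z ∈ z, ∀ X ∈ zᗮ, ∀ Y ∈ zᗮ, ⟪J Z X, Y⟫ = ⟪Z, bracket X Y⟫)
    (hJmem : ∀ Z ∈ z, ∀ X ∈ zᗮ, J Z X ∈ zᗮ)
    (hJorth : ∀ Z ∈ z, ‖Z‖ = 1 → ∀ X ∈ zᗮ, ‖J Z X‖ = ‖X‖)
    {X : g} (hX : X ∈ zᗮ) (hX0 : X ≠ 0) {Z : g} (hZ : Z ∈ z)
    (h : ∀ Y ∈ zᗮ, ⟪Z, bracket X Y⟫ = 0) : Z = 0 := by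
  by_contra hZ0
  have hunit := inner_bracket_J_self hJdef hJmem hJorth (z.smul_mem ‖Z‖⁻¹ hZ)
    (norm_smul_inv_norm hZ0) hX
  rw [real_inner_smul_left, h _ (hJmem _ (z.smul_mem _ hZ) X hX), mul_zero] at hunit
  exact hX0 (norm_eq_zero.mp (pow_eq_zero_iff two_ne_zero |>.mp hunit.symm))

lemma even_finrank_orthogonal_center [FiniteDimensional ℝ g]
    (hanti : ∀ X Y : g, bracket X Y = - bracket Y X)
    (hJdef : ∀ Z ∈ z, ∀ X ∈ zᗮ, ∀ Y ∈ zᗮ, ⟪J Z X, Y⟫ = ⟪Z, bracket X Y⟫)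
    (hJmem : ∀ Z ∈ z, ∀ X ∈ zᗮ, J Z X ∈ zᗮ)
    (hJorth : ∀ Z ∈ z, ‖Z‖ = 1 → ∀ X ∈ zᗮ, ‖J Z X‖ = ‖X‖)
    {Z : g} (hZ : Z ∈ z) (hZ1 : ‖Z‖ = 1) : Even (finrank ℝ zᗮ) := by
  let T : zᗮ →ₗ[ℝ] zᗮ := (J Z).restrict (hJmem Z hZ)
  refine T.even_finrank_of_comp_self_eq_neg_id (T.comp_self_eq_neg_id_of_skew_of_norm_map ?_ ?_)
  · intro a b
    simp only [T, Submodule.coe_inner, LinearMap.coe_restrict_apply]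
    rw [hJdef Z hZ a a.2 b b.2, hanti, inner_neg_right, ← hJdef Z hZ b b.2 a a.2, real_inner_comm]
  · intro a
    simp only [T, ← Submodule.norm_coe, LinearMap.coe_restrict_apply]
    exact hJorth Z hZ hZ1 a a.2

lemma finrank_center_add_one_le [FiniteDimensional ℝ g]
    (hanti : ∀ X Y : g, bracket X Y = - bracket Y X)
    (hJdef : ∀ Z ∈ z, ∀ X ∈ zᗮ, ∀ Y ∈ zᗮ, ⟪J Z X, Y⟫ = ⟪Z, bracket X Y⟫)
    (hJmem : ∀ Z ∈ z, ∀ X ∈ zᗮ, J Z X ∈ zᗮ)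
    (hJorth : ∀ Z ∈ z, ‖Z‖ = 1 → ∀ X ∈ zᗮ, ‖J Z X‖ = ‖X‖)
    (hbz : ∀ X ∈ zᗮ, ∀ Y ∈ zᗮ, bracket X Y ∈ z) {X : g} (hX : X ∈ zᗮ) (hX0 : X ≠ 0) :
    finrank ℝ z + 1 ≤ finrank ℝ zᗮ := by
  let adX : zᗮ →ₗ[ℝ] g := (bracket X).domRestrict zᗮ
  have hle : LinearMap.range adX ≤ z := by
    rintro _ ⟨Y, rfl⟩
    exact hbz X hX Y Y.2
  have hrange : LinearMap.range adX = z := by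
    have hperp : (LinearMap.range adX)ᗮ ⊓ z = ⊥ := by
      refine (Submodule.eq_bot_iff _).mpr fun Z ⟨hZperp, hZ⟩ => ?_
      refine eq_zero_of_inner_bracket_eq_zero hJdef hJmem hJorth hX hX0 hZ fun Y hY => ?_
      rw [real_inner_comm]
      exact (Submodule.mem_orthogonal _ _).mp hZperp _ ⟨⟨Y, hY⟩, rfl⟩
    simpa [hperp] using Submodule.sup_orthogonal_inf_of_hasOrthogonalProjection hle
  have hker : LinearMap.ker adX ≠ ⊥ := by
    refine (Submodule.ne_bot_iff _).mpr ⟨⟨X, hX⟩, ?_, by simpa using hX0⟩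
    simp [adX, bracket_self_eq_zero hanti]
  have hrank := adX.finrank_range_add_finrank_ker
  rw [hrange] at hrank
  have := Submodule.one_le_finrank_iff.mpr hker
  omega

end HType

theorem stmt3_general {g : Type*} [NormedAddCommGroup g] [InnerProductSpace ℝ g]
    [FiniteDimensional ℝ g] [Nontrivial g]
    (bracket : g →ₗ[ℝ] g →ₗ[ℝ] g)
    (hanti : ∀ X Y : g, bracket X Y = - bracket Y X)
    (z : Submodule ℝ g)
    (hz : ∀ Z : g, Z ∈ z ↔ ∀ Y : g, bracket Z Y = 0)
    (J : g → g →ₗ[ℝ] g)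
    (hJdef : ∀ Z ∈ z, ∀ X ∈ zᗮ, ∀ Y ∈ zᗮ, ⟪J Z X, Y⟫ = ⟪Z, bracket X Y⟫)
    (hJmem : ∀ Z ∈ z, ∀ X ∈ zᗮ, J Z X ∈ zᗮ)
    (hJorth : ∀ Z ∈ z, ‖Z‖ = 1 → ∀ X ∈ zᗮ, ‖J Z X‖ = ‖X‖)
    (hbz : ∀ X ∈ zᗮ, ∀ Y ∈ zᗮ, bracket X Y ∈ z)
    (hspan : ∀ W ∈ z,
      W ∈ Submodule.span ℝ {w : g | ∃ X ∈ zᗮ, ∃ Y ∈ zᗮ, w = bracket X Y}) :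
    Even (Module.finrank ℝ zᗮ) ∧ Module.finrank ℝ z + 1 ≤ Module.finrank ℝ zᗮ := by
  obtain ⟨Z, hZ, hZ0⟩ := Submodule.exists_mem_ne_zero_of_ne_bot (center_ne_bot hz hbz)
  obtain ⟨X, hX, hX0⟩ := Submodule.exists_mem_ne_zero_of_ne_bot (orthogonal_center_ne_bot hspan)
  exact ⟨even_finrank_orthogonal_center hanti hJdef hJmem hJorth (z.smul_mem ‖Z‖⁻¹ hZ)
      (norm_smul_inv_norm hZ0),
    finrank_center_add_one_le hanti hJdef hJmem hJorth hbz hX hX0⟩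

theorem stmt3 {g : Type*} [NormedAddCommGroup g] [InnerProductSpace ℝ g]
    [FiniteDimensional ℝ g] [Nontrivial g]
    (bracket : g →ₗ[ℝ] g →ₗ[ℝ] g)
    (hanti : ∀ X Y : g, bracket X Y = - bracket Y X)
    (hjacobi : ∀ X Y Z : g,
      bracket X (bracket Y Z) + bracket Y (bracket Z X) + bracket Z (bracket X Y) = 0)
    (z : Submodule ℝ g)
    (hz : ∀ Z : g, Z ∈ z ↔ ∀ Y : g, bracket Z Y = 0)
    (J : g → g →ₗ[ℝ] g)
    (hJdef : ∀ Z ∈ z, ∀ X ∈ zᗮ, ∀ Y ∈ zᗮ, ⟪J Z X, Y⟫ = ⟪Z, bracket X Y⟫)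
    (hJmem : ∀ Z ∈ z, ∀ X ∈ zᗮ, J Z X ∈ zᗮ)
    (hJorth : ∀ Z ∈ z, ‖Z‖ = 1 → ∀ X ∈ zᗮ, ‖J Z X‖ = ‖X‖)
    (hbz : ∀ X ∈ zᗮ, ∀ Y ∈ zᗮ, bracket X Y ∈ z)
    (hspan : ∀ W ∈ z,
      W ∈ Submodule.span ℝ {w : g | ∃ X ∈ zᗮ, ∃ Y ∈ zᗮ, w = bracket X Y}) :
    Even (Module.finrank ℝ zᗮ) ∧ Module.finrank ℝ z + 1 ≤ Module.finrank ℝ zᗮ :=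
  stmt3_general bracket hanti z hz J hJdef hJmem hJorth hbz hspan
end

section
/- For α ∈ ℝ and β ∈ [0, π) with α ≠ 0, Re((α + iβ) coth(α + iβ)) > β cot β, with equality if and only if α = 0 (interpreting β cot β = 1 at β = 0). -/
/-!
Writing `z = α + iβ`, one has `Re (z coth z) = (α sinh α cosh α + β sin β cos β) / (sinh² α + sin² β)`.
With `L = β cot β` this reads `(α sinh α cosh α + L sin² β) / (sinh² α + sin² β)`, which exceeds `L`
because `α sinh α cosh α > sinh² α ≥ L sinh² α`: the first inequality is `α coth α > 1`, the second is
`β cot β ≤ 1` on `[0, π)`.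
-/

open Real

namespace Real

theorem sinh_lt_mul_cosh {x : ℝ} (hx : 0 < x) : sinh x < x * cosh x := by
  have hderiv (t : ℝ) : HasDerivAt (fun t => t * cosh t - sinh t) (t * sinh t) t :=
    (((hasDerivAt_id' t).mul (hasDerivAt_cosh t)).sub (hasDerivAt_sinh t)).congr_deriv
      (by ring)
  have hmono : StrictMonoOn (fun t => t * cosh t - sinh t) (Set.Ici 0) := by
    refine strictMonoOn_of_deriv_pos (convex_Ici 0) (by fun_prop) fun t ht => ?_
    rw [interior_Ici, Set.mem_Ioi] at ht
    rw [(hderiv t).deriv]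
    exact mul_pos ht (sinh_pos_iff.2 ht)
  simpa using hmono Set.self_mem_Ici hx.le hx

theorem sinh_sq_lt_mul_sinh_mul_cosh {x : ℝ} (hx : x ≠ 0) :
    sinh x ^ 2 < x * (sinh x * cosh x) := by
  rcases hx.lt_or_gt with hneg | hpos
  · have h := sinh_lt_mul_cosh (neg_pos.2 hneg)
    rw [sinh_neg, cosh_neg] at h
    nlinarith [sinh_neg_iff.2 hneg]
  · nlinarith [sinh_lt_mul_cosh hpos, sinh_pos_iff.2 hpos]

theorem mul_cos_le_sin {x : ℝ} (h0 : 0 ≤ x) (hπ : x ≤ π) : x * cos x ≤ sin x := by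
  rcases lt_or_ge x (π / 2) with hlt | hge
  · rcases h0.eq_or_lt with rfl | hpos
    · simp
    have hcos := cos_pos_of_mem_Ioo ⟨by linarith [pi_pos], hlt⟩
    have htan := lt_tan hpos hlt
    rw [tan_eq_sin_div_cos, lt_div_iff₀ hcos] at htan
    exact htan.le
  · nlinarith [cos_nonpos_of_pi_div_two_le_of_le hge (by linarith [pi_pos]),
      sin_nonneg_of_nonneg_of_le_pi h0 hπ]

theorem mul_cot_le_one {x : ℝ} (h0 : 0 < x) (hπ : x < π) : x * cot x ≤ 1 := by
  rw [cot_eq_cos_div_sin, ← mul_div_assoc, div_le_one (sin_pos_of_pos_of_lt_pi h0 hπ)]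
  exact mul_cos_le_sin h0.le hπ.le

theorem mul_cot_mul_sin_sq (x : ℝ) : x * cot x * sin x ^ 2 = x * (sin x * cos x) := by
  rcases eq_or_ne (sin x) 0 with h | h
  · simp [h]
  · rw [cot_eq_cos_div_sin]
    field_simp

end Real

namespace Complex

variable (x y : ℝ)

theorem sinh_ofReal_add_mul_I :
    sinh (x + y * I) = ↑(Real.sinh x * Real.cos y) + ↑(Real.cosh x * Real.sin y) * I := by
  push_cast
  rw [sinh_add, sinh_mul_I, cosh_mul_I]
  ring

theorem cosh_ofReal_add_mul_I :
    cosh (x + y * I) = ↑(Real.cosh x * Real.cos y) + ↑(Real.sinh x * Real.sin y) * I := by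
  push_cast
  rw [cosh_add, sinh_mul_I, cosh_mul_I]
  ring

theorem normSq_sinh_ofReal_add_mul_I :
    normSq (sinh (x + y * I)) = Real.sinh x ^ 2 + Real.sin y ^ 2 := by
  rw [sinh_ofReal_add_mul_I, normSq_add_mul_I]
  linear_combination Real.sin y ^ 2 * Real.cosh_sq x + Real.sinh x ^ 2 * Real.sin_sq_add_cos_sq y

/-- Both sides vanish when `sinh (x + y i) = 0`. -/
theorem re_mul_cosh_div_sinh_ofReal_add_mul_I :
    ((x + y * I) * (cosh (x + y * I) / sinh (x + y * I))).re =
      (x * (Real.sinh x * Real.cosh x) + y * (Real.sin y * Real.cos y)) /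
        (Real.sinh x ^ 2 + Real.sin y ^ 2) := by
  rw [mul_re, div_re, div_im, normSq_sinh_ofReal_add_mul_I, sinh_ofReal_add_mul_I,
    cosh_ofReal_add_mul_I]
  simp only [add_re, add_im, mul_re, mul_im, ofReal_re, ofReal_im, I_re, I_im]
  linear_combination (x * Real.sinh x * Real.cosh x * Real.sin_sq_add_cos_sq y
    + y * Real.sin y * Real.cos y * Real.cosh_sq x) / (Real.sinh x ^ 2 + Real.sin y ^ 2)

end Complex

/-- For `α ≠ 0` and `β ∈ [0, π)`,
`Re((α + iβ) coth(α + iβ)) > β cot β` (interpreting `β cot β = 1` at `β = 0`). -/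
theorem stmt11 (α β : ℝ) (hβ : β ∈ Set.Ico (0:ℝ) Real.pi) (hα : α ≠ 0) :
    (if β = 0 then (1:ℝ) else β * Real.cot β) <
      (((α : ℂ) + (β : ℂ) * Complex.I) *
        (Complex.cosh ((α : ℂ) + (β : ℂ) * Complex.I) /
          Complex.sinh ((α : ℂ) + (β : ℂ) * Complex.I))).re := by
  rw [Complex.re_mul_cosh_div_sinh_ofReal_add_mul_I]
  set L := if β = 0 then (1:ℝ) else β * cot β
  have hL : L ≤ 1 := by
    simp only [L]
    split_ifs with hβ0
    · exact le_rfl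
    · exact mul_cot_le_one (hβ.1.lt_of_ne' hβ0) hβ.2
  have hsin_cos : β * (sin β * cos β) = L * sin β ^ 2 := by
    simp only [L]
    split_ifs with hβ0
    · simp [hβ0]
    · exact (mul_cot_mul_sin_sq β).symm
  have hsinh_sq : 0 < sinh α ^ 2 := by positivity [sinh_ne_zero.2 hα]
  rw [lt_div_iff₀ (add_pos_of_pos_of_nonneg hsinh_sq (sq_nonneg _)), hsin_cos]
  linarith [sinh_sq_lt_mul_sinh_mul_cosh hα, mul_le_mul_of_nonneg_right hL hsinh_sq.le]
end

section
/- For a, b ∈ ℝ^m, let (a+bi)² denote the complex bilinear square a·a - b·b + 2i a·b, and let √ denote the branch of square root with nonnegative imaginary part. Then |a| - |b| ≤ |Re √((a+bi)²)| ≤ |a| and 0 ≤ Im √((a+bi)²) ≤ |b|, with equality in the upper bounds if and only if a and b are parallel. -/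
open scoped RealInnerProductSpace

/-! Let `s = x + iy` be the chosen square root of `(a+bi)²`, so `y ≥ 0`. Comparing real and
imaginary parts of `s² = (a+bi)²` gives `x² - y² = |a|² - |b|²` and `xy = a·b`, and
Cauchy–Schwarz turns the latter into `|xy| ≤ |a||b|`. For reals with `x² - y² = A² - B²`,
the bound `|xy| ≤ AB` forces `|x| ≤ A` and `|y| ≤ B`, with equality exactly when `|xy| = AB`,
i.e. exactly in the equality case of Cauchy–Schwarz. -/

/-- The bilinear square `(a+bi)² = |a|² - |b|² + 2i a·b` of `a, b ∈ ℝᵐ`. -/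
noncomputable def bilinSq {m : ℕ} (a b : EuclideanSpace ℝ (Fin m)) : ℂ :=
  ((‖a‖ ^ 2 - ‖b‖ ^ 2 : ℝ) : ℂ) + ((2 * ⟪a, b⟫ : ℝ) : ℂ) * Complex.I

/-- The branch of the square root with nonnegative imaginary part and `√w > 0` for
`w > 0` (branch cut on the positive real axis): it agrees with the principal square
root when `Im w ≥ 0` and is its negative when `Im w < 0`. -/
noncomputable def sqrtBranch (w : ℂ) : ℂ :=
  if 0 ≤ w.im then w ^ ((1 : ℂ) / 2) else -(w ^ ((1 : ℂ) / 2))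

lemma sqrtBranch_sq (w : ℂ) : sqrtBranch w ^ 2 = w := by
  have h : (w ^ ((1 : ℂ) / 2)) ^ 2 = w := by
    simpa only [one_div, Nat.cast_ofNat] using Complex.cpow_nat_inv_pow w two_ne_zero
  unfold sqrtBranch
  split <;> simp only [neg_sq, h]

lemma sqrtBranch_im_nonneg (w : ℂ) : 0 ≤ (sqrtBranch w).im := by
  unfold sqrtBranch
  split_ifs with h
  · rw [one_div, Complex.cpow_inv_two_im_eq_sqrt h]
    exact Real.sqrt_nonneg _
  · rw [Complex.neg_im, one_div, Complex.cpow_inv_two_im_eq_neg_sqrt (not_le.1 h), neg_neg]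
    exact Real.sqrt_nonneg _

lemma re_sq_sub_im_sq_and_re_mul_im_of_sq_eq_bilinSq {m : ℕ} {a b : EuclideanSpace ℝ (Fin m)}
    {z : ℂ} (h : z ^ 2 = bilinSq a b) :
    z.re ^ 2 - z.im ^ 2 = ‖a‖ ^ 2 - ‖b‖ ^ 2 ∧ z.re * z.im = ⟪a, b⟫ := by
  simp only [bilinSq, Complex.ext_iff, sq, Complex.mul_re, Complex.mul_im, Complex.add_re,
    Complex.add_im, Complex.ofReal_re, Complex.ofReal_im, Complex.I_re, Complex.I_im] at h
  constructor <;> linarith [h.1, h.2]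

theorem abs_real_inner_eq_norm_mul_norm_iff {F : Type*} [NormedAddCommGroup F]
    [InnerProductSpace ℝ F] (a b : F) :
    |⟪a, b⟫| = ‖a‖ * ‖b‖ ↔ ∃ r : ℝ, a = r • b ∨ b = r • a := by
  rw [← Real.norm_eq_abs, ((norm_inner_eq_norm_tfae ℝ a b).out 0 2 :)]
  constructor
  · rintro (rfl | ⟨r, rfl⟩)
    · exact ⟨0, Or.inl (zero_smul ℝ b).symm⟩
    · exact ⟨r, Or.inr rfl⟩
  · rintro ⟨r, rfl | rfl⟩
    · rcases eq_or_ne r 0 with rfl | hr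
      · exact Or.inl (zero_smul ℝ b)
      · exact Or.inr ⟨r⁻¹, (inv_smul_smul₀ hr b).symm⟩
    · exact Or.inr ⟨r, rfl⟩

section SquareDifference

variable {x y A B : ℝ}

lemma sub_le_abs_of_sq_sub_sq_eq (hB : 0 ≤ B) (hdiff : x ^ 2 - y ^ 2 = A ^ 2 - B ^ 2) :
    A - B ≤ |x| := by
  rcases le_or_gt A B with hAB | hBA
  · linarith [abs_nonneg x]
  · nlinarith [sq_abs x, abs_nonneg x, sq_nonneg y]

lemma abs_le_and_abs_le_of_sq_sub_sq_eq (hA : 0 ≤ A) (hB : 0 ≤ B)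
    (hdiff : x ^ 2 - y ^ 2 = A ^ 2 - B ^ 2) (hprod : |x * y| ≤ A * B) :
    |x| ≤ A ∧ |y| ≤ B := by
  rw [abs_mul] at hprod
  have hx := sq_abs x
  have hy := sq_abs y
  constructor
  · by_contra! hAx
    have hBy : B < |y| := by nlinarith [abs_nonneg y]
    exact (mul_lt_mul'' hAx hBy hA hB).not_ge hprod
  · by_contra! hBy
    have hAx : A < |x| := by nlinarith [abs_nonneg x]
    exact (mul_lt_mul'' hAx hBy hA hB).not_ge hprod

lemma abs_eq_and_abs_eq_iff_abs_mul_eq_of_sq_sub_sq_eq (hA : 0 ≤ A) (hB : 0 ≤ B)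
    (hdiff : x ^ 2 - y ^ 2 = A ^ 2 - B ^ 2) :
    |x| = A ∧ |y| = B ↔ |x * y| = A * B := by
  refine ⟨fun ⟨hx, hy⟩ => by rw [abs_mul, hx, hy], fun hprod => ?_⟩
  obtain ⟨hxA, hyB⟩ := abs_le_and_abs_le_of_sq_sub_sq_eq hA hB hdiff hprod.le
  rw [abs_mul] at hprod
  have hx := sq_abs x
  have hy := sq_abs y
  have hAx : |x| = A := by
    by_contra hne
    have hxA' : |x| < A := lt_of_le_of_ne hxA hne
    have hyB' : |y| < B := by nlinarith [abs_nonneg x, abs_nonneg y]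
    exact (mul_lt_mul'' hxA' hyB' (abs_nonneg x) (abs_nonneg y)).ne hprod
  refine ⟨hAx, ?_⟩
  nlinarith [abs_nonneg y]

end SquareDifference

theorem stmt12 (m : ℕ) (a b : EuclideanSpace ℝ (Fin m)) :
    ‖a‖ - ‖b‖ ≤ |(sqrtBranch (bilinSq a b)).re| ∧
    |(sqrtBranch (bilinSq a b)).re| ≤ ‖a‖ ∧
    0 ≤ (sqrtBranch (bilinSq a b)).im ∧
    (sqrtBranch (bilinSq a b)).im ≤ ‖b‖ ∧
    ((|(sqrtBranch (bilinSq a b)).re| = ‖a‖ ∧ (sqrtBranch (bilinSq a b)).im = ‖b‖)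
      ↔ ∃ r : ℝ, a = r • b ∨ b = r • a) := by
  have hsq := sqrtBranch_sq (bilinSq a b)
  have him := sqrtBranch_im_nonneg (bilinSq a b)
  generalize sqrtBranch (bilinSq a b) = s at hsq him ⊢
  obtain ⟨hdiff, hprod⟩ := re_sq_sub_im_sq_and_re_mul_im_of_sq_eq_bilinSq hsq
  have hcs : |s.re * s.im| ≤ ‖a‖ * ‖b‖ := hprod ▸ abs_real_inner_le_norm a b
  obtain ⟨hre_le, him_le⟩ :=
    abs_le_and_abs_le_of_sq_sub_sq_eq (norm_nonneg a) (norm_nonneg b) hdiff hcs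
  refine ⟨sub_le_abs_of_sq_sub_sq_eq (norm_nonneg b) hdiff, hre_le, him,
    (le_abs_self _).trans him_le, ?_⟩
  rw [← abs_real_inner_eq_norm_mul_norm_iff, ← hprod,
    ← abs_eq_and_abs_eq_iff_abs_mul_eq_of_sq_sub_sq_eq (norm_nonneg a) (norm_nonneg b) hdiff,
    abs_of_nonneg him]
end

section
/- Define F(θ) = θ²/(θ - sin θ cos θ) for θ > π/2 (removing removable singularities). If π/2 < θ₁ < π < θ₂, then F(θ₁) < F(θ₂). In particular F is strictly increasing on (π/2, π), F(π) = π, and F(θ) > π for all θ > π. -/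
/-!
On `(π/2, π)` the derivative `F' = 2θ cos θ (θ cos θ - sin θ) / (θ - sin θ cos θ)²` is a product
of two negative factors over a square, so `F` increases up to `F π = π`. Past `π`, shifting by `π`
and using `|sin y cos y| ≤ |sin y| ≤ y` gives `θ - sin θ cos θ ≤ 2θ - π`, hence
`π (θ - sin θ cos θ) ≤ θ² - (θ - π)² < θ²`, i.e. `F θ > π`.
-/

/-- `F(θ) = θ²/(θ - sin θ cos θ)`. -/
noncomputable def F (θ : ℝ) : ℝ := θ ^ 2 / (θ - Real.sin θ * Real.cos θ)

open Real Set

lemma sin_mul_cos_lt_self {θ : ℝ} (hθ : 0 < θ) : sin θ * cos θ < θ := by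
  have := sin_lt (by positivity : 0 < 2 * θ)
  rw [sin_two_mul] at this
  linarith

lemma pi_sub_self_le_sin_mul_cos {θ : ℝ} (hθ : π ≤ θ) : π - θ ≤ sin θ * cos θ := by
  have hshift : sin θ * cos θ = sin (θ - π) * cos (θ - π) := by
    rw [sin_sub_pi, cos_sub_pi, neg_mul_neg]
  have hbound : |sin (θ - π) * cos (θ - π)| ≤ θ - π :=
    calc |sin (θ - π) * cos (θ - π)| = |sin (θ - π)| * |cos (θ - π)| := abs_mul _ _
      _ ≤ |sin (θ - π)| := mul_le_of_le_one_right (abs_nonneg _) (abs_cos_le_one _)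
      _ ≤ |θ - π| := abs_sin_le_abs
      _ = θ - π := abs_of_nonneg (sub_nonneg.2 hθ)
  rw [hshift]
  linarith [neg_abs_le (sin (θ - π) * cos (θ - π))]

lemma hasDerivAt_F {θ : ℝ} (hθ : 0 < θ) :
    HasDerivAt F
      (2 * θ * cos θ * (θ * cos θ - sin θ) / (θ - sin θ * cos θ) ^ 2) θ := by
  have hnum : HasDerivAt (fun x : ℝ => x ^ 2) (2 * θ) θ := by
    simpa using hasDerivAt_pow 2 θ
  have hden := (hasDerivAt_id θ).sub ((hasDerivAt_sin θ).mul (hasDerivAt_cos θ))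
  refine (hnum.div hden (sub_pos.2 (sin_mul_cos_lt_self hθ)).ne').congr_deriv ?_
  congr 1
  simp only [Pi.sub_apply, Pi.mul_apply, id_eq]
  linear_combination -θ ^ 2 * sin_sq_add_cos_sq θ

lemma F_strictMonoOn : StrictMonoOn F (Icc (π / 2) π) := by
  have hpi := pi_pos
  refine strictMonoOn_of_deriv_pos (convex_Icc _ _) ?_ fun θ hθ => ?_
  · exact fun θ hθ => (hasDerivAt_F (by linarith [hθ.1])).continuousAt.continuousWithinAt
  rw [interior_Icc] at hθ
  obtain ⟨hθ₁, hθ₂⟩ := hθ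
  have hθ₀ : 0 < θ := by linarith
  have hcos : cos θ < 0 := cos_neg_of_pi_div_two_lt_of_lt hθ₁ (by linarith)
  have hsin : 0 < sin θ := sin_pos_of_pos_of_lt_pi hθ₀ hθ₂
  have hfactor : θ * cos θ - sin θ < 0 := by nlinarith
  rw [(hasDerivAt_F hθ₀).deriv]
  have hden : 0 < (θ - sin θ * cos θ) ^ 2 := pow_pos (sub_pos.2 (sin_mul_cos_lt_self hθ₀)) 2
  exact div_pos (mul_pos_of_neg_of_neg (by nlinarith) hfactor) hden

lemma F_pi : F π = π := by
  rw [F, sin_pi, zero_mul, sub_zero, sq, mul_self_div_self]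

lemma pi_lt_F {θ : ℝ} (hθ : π < θ) : π < F θ := by
  have hpi := pi_pos
  have hden : 0 < θ - sin θ * cos θ := sub_pos.2 (sin_mul_cos_lt_self (hpi.trans hθ))
  rw [F, lt_div_iff₀ hden]
  nlinarith [pi_sub_self_le_sin_mul_cos hθ.le]

theorem stmt17 :
    (∀ θ₁ θ₂ : ℝ, Real.pi / 2 < θ₁ → θ₁ < Real.pi → Real.pi < θ₂ → F θ₁ < F θ₂) ∧
    StrictMonoOn F (Set.Ioo (Real.pi / 2) Real.pi) ∧
    F Real.pi = Real.pi ∧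
    (∀ θ : ℝ, Real.pi < θ → Real.pi < F θ) := by
  refine ⟨fun θ₁ θ₂ h₁ h₂ h₃ => ?_, F_strictMonoOn.mono Ioo_subset_Icc_self, F_pi,
    fun θ => pi_lt_F⟩
  have hpi : π / 2 ≤ π := half_le_self pi_pos.le
  calc F θ₁ < F π := F_strictMonoOn ⟨h₁.le, h₂.le⟩ ⟨hpi, le_rfl⟩ h₂
    _ = π := F_pi
    _ < F θ₂ := pi_lt_F h₃
end

section
/- Define ν(θ) = (θ - sin θ cos θ)/sin²θ for θ not a multiple of π. For every y ∈ [0, π/2], the equation ν(θ) = y has exactly one solution θ in [0, ∞) (with ν(0) := 0), and that solution lies in [0, π). -/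
/-!
`ν` is continuous on `[0, π)` (squeezed between `0` and `tan` at the origin) and its
derivative `2 sin θ (sin θ - θ cos θ) / sin⁴ θ` is positive on `(0, π)`, so `ν` is strictly
increasing there. Since `ν 0 = 0` and `ν (π/2) = π/2`, the intermediate value theorem gives a
solution in `[0, π/2]`, unique in `[0, π)`. Beyond `π`, `sin θ cos θ ≤ 1/2` and `sin² θ ≤ 1`
give `ν θ ≥ θ - 1/2 > π/2`, so there are no further solutions.
-/

/-- `ν(θ) = (θ - sin θ cos θ)/sin²θ` (with `ν(0) = 0`; the Lean formula gives `0`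
at `θ = 0`, matching the stated convention). -/
noncomputable def nu (θ : ℝ) : ℝ := (θ - Real.sin θ * Real.cos θ) / (Real.sin θ) ^ 2

open Real Set Filter Topology

lemma sin_mul_cos_le_self {θ : ℝ} (hθ : 0 ≤ θ) : sin θ * cos θ ≤ θ := by
  have h := sin_le (by linarith : 0 ≤ 2 * θ)
  rw [sin_two_mul] at h
  linarith

lemma sin_mul_cos_le_half (θ : ℝ) : sin θ * cos θ ≤ 1 / 2 := by
  have h := sin_le_one (2 * θ)
  rw [sin_two_mul] at h
  linarith

lemma mul_cos_lt_sin {θ : ℝ} (h0 : 0 < θ) (hπ : θ < π) : θ * cos θ < sin θ := by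
  have hs : 0 < sin θ := sin_pos_of_pos_of_lt_pi h0 hπ
  rcases le_or_gt (π / 2) θ with h | h
  · have hc : cos θ ≤ 0 := cos_nonpos_of_pi_div_two_le_of_le h (by linarith)
    nlinarith
  · have hc : 0 < cos θ := cos_pos_of_mem_Ioo ⟨by linarith, h⟩
    have ht := lt_tan h0 h
    rwa [tan_eq_sin_div_cos, lt_div_iff₀ hc] at ht

lemma sin_ne_zero_of_forall_ne_nat_mul_pi {θ : ℝ} (hθ : 0 ≤ θ)
    (h : ∀ k : ℕ, θ ≠ k * π) : sin θ ≠ 0 := by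
  intro hs
  obtain ⟨n, rfl⟩ := sin_eq_zero_iff.1 hs
  have hn : (0 : ℝ) ≤ n := nonneg_of_mul_nonneg_left hθ pi_pos
  lift n to ℕ using by exact_mod_cast hn
  exact h n (by push_cast; rfl)

lemma nu_zero : nu 0 = 0 := by simp [nu]

lemma nu_pi_div_two : nu (π / 2) = π / 2 := by simp [nu]

lemma nu_nonneg {θ : ℝ} (hθ : 0 ≤ θ) : 0 ≤ nu θ :=
  div_nonneg (sub_nonneg.2 (sin_mul_cos_le_self hθ)) (sq_nonneg _)

lemma nu_le_tan {θ : ℝ} (h0 : 0 ≤ θ) (h : θ < π / 2) : nu θ ≤ tan θ := by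
  rcases h0.eq_or_lt with rfl | h0
  · simp [nu_zero]
  have hs : 0 < sin θ := sin_pos_of_pos_of_lt_pi h0 (by linarith [pi_pos])
  have hc : 0 < cos θ := cos_pos_of_mem_Ioo ⟨by linarith, h⟩
  have hθ := mul_cos_lt_sin h0 (by linarith [pi_pos])
  rw [nu, tan_eq_sin_div_cos, div_le_div_iff₀ (by positivity) hc]
  -- `(θ - s c) c ≤ s³` is `θ c ≤ s (s² + c²)`
  nlinarith [sin_sq_add_cos_sq θ]

lemma sub_half_le_nu {θ : ℝ} (h : 1 / 2 ≤ θ) (hs : sin θ ≠ 0) : θ - 1 / 2 ≤ nu θ := by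
  have hnum : θ - 1 / 2 ≤ θ - sin θ * cos θ := by linarith [sin_mul_cos_le_half θ]
  have hsq : sin θ ^ 2 ≤ 1 := sin_sq_le_one θ
  rw [nu, le_div_iff₀ (by positivity)]
  nlinarith

lemma hasDerivAt_nu {θ : ℝ} (hs : sin θ ≠ 0) :
    HasDerivAt nu (2 * sin θ * (sin θ - θ * cos θ) / sin θ ^ 4) θ := by
  have hnum : HasDerivAt (fun t => t - sin t * cos t) (2 * sin θ ^ 2) θ := by
    refine ((hasDerivAt_id θ).sub ((hasDerivAt_sin θ).mul (hasDerivAt_cos θ))).congr_deriv ?_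
    linear_combination -sin_sq_add_cos_sq θ
  have hden : HasDerivAt (fun t => sin t ^ 2) (2 * sin θ * cos θ) θ :=
    ((hasDerivAt_sin θ).pow 2).congr_deriv (by ring)
  refine (hnum.div hden (pow_ne_zero 2 hs)).congr_deriv ?_
  rw [← pow_mul]
  congr 1
  linear_combination 2 * sin θ ^ 2 * sin_sq_add_cos_sq θ

lemma continuousWithinAt_nu_zero : ContinuousWithinAt nu (Ici 0) 0 := by
  have htan : Tendsto tan (𝓝[≥] 0) (𝓝 0) := by
    simpa using (continuousAt_tan.2 (cos_zero.trans_ne one_ne_zero)).continuousWithinAt.tendsto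
  have hsmall : ∀ᶠ θ in 𝓝[≥] (0 : ℝ), 0 ≤ θ ∧ θ < π / 2 := by
    filter_upwards [self_mem_nhdsWithin,
      nhdsWithin_le_nhds (eventually_lt_nhds (by positivity : (0 : ℝ) < π / 2))] with θ h0 h
    exact ⟨h0, h⟩
  rw [ContinuousWithinAt, nu_zero]
  refine tendsto_of_tendsto_of_tendsto_of_le_of_le' tendsto_const_nhds htan ?_ ?_
  · filter_upwards [hsmall] with θ h using nu_nonneg h.1
  · filter_upwards [hsmall] with θ h using nu_le_tan h.1 h.2

lemma continuousOn_nu : ContinuousOn nu (Ico 0 π) := by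
  rintro x ⟨hx0, hxπ⟩
  rcases hx0.eq_or_lt with rfl | hx0
  · exact continuousWithinAt_nu_zero.mono Ico_subset_Ici_self
  · exact (hasDerivAt_nu (sin_pos_of_pos_of_lt_pi hx0 hxπ).ne').continuousAt.continuousWithinAt

lemma strictMonoOn_nu : StrictMonoOn nu (Ico 0 π) := by
  refine strictMonoOn_of_deriv_pos (convex_Ico 0 π) continuousOn_nu fun x hx => ?_
  rw [interior_Ico] at hx
  have hs : 0 < sin x := sin_pos_of_pos_of_lt_pi hx.1 hx.2
  have hkey : 0 < sin x - x * cos x := sub_pos.2 (mul_cos_lt_sin hx.1 hx.2)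
  rw [(hasDerivAt_nu hs.ne').deriv]
  positivity

lemma pi_div_two_lt_nu {θ : ℝ} (hθ : π ≤ θ) (hs : sin θ ≠ 0) : π / 2 < nu θ := by
  have := sub_half_le_nu (by linarith [pi_gt_three]) hs
  linarith [pi_gt_three]

/-- For every `y ∈ [0, π/2]`, the equation `ν(θ) = y` has exactly one solution
`θ ∈ [0, ∞)` (excluding positive multiples of `π`, where `ν` is undefined), and
that solution lies in `[0, π)`. -/
theorem stmt18 :
    ∀ y ∈ Set.Icc (0:ℝ) (Real.pi / 2),
      ∃ θ ∈ Set.Ico (0:ℝ) Real.pi, nu θ = y ∧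
        ∀ θ' : ℝ, 0 ≤ θ' → (θ' = 0 ∨ ∀ k : ℕ, θ' ≠ k * Real.pi) →
          nu θ' = y → θ' = θ := by
  intro y hy
  have hsub : Icc 0 (π / 2) ⊆ Ico 0 π := Icc_subset_Ico_right (by linarith [pi_pos])
  have hivt := intermediate_value_Icc (by positivity) (continuousOn_nu.mono hsub)
  rw [nu_zero, nu_pi_div_two] at hivt
  obtain ⟨θ, hθ, rfl⟩ := hivt hy
  refine ⟨θ, hsub hθ, rfl, fun θ' hθ'0 hθ'k hνθ' => ?_⟩
  have hθ'π : θ' < π := by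
    by_contra! hπ
    have hs := sin_ne_zero_of_forall_ne_nat_mul_pi hθ'0
      (hθ'k.resolve_left (by linarith [pi_pos]))
    linarith [pi_div_two_lt_nu hπ hs, hy.2]
  exact strictMonoOn_nu.injOn ⟨hθ'0, hθ'π⟩ (hsub hθ) hνθ'
end
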